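/- Let n ≥ 1 and δ ∈ (0, n]. If f ∈ nL¹(ℝⁿ, H̃^δ_∞) is an nL¹-limit of continuous functions, then f is Lebesgue measurable. -/

import Mathlib

open MeasureTheory Set Metric Filter Topology
open scoped ENNReal

noncomputable section

/-- Euclidean space `ℝⁿ`. -/
abbrev En (n : ℕ) : Type := EuclideanSpace ℝ (Fin n)

/-- The half-open dyadic cube `2^k (m + [0,1)ⁿ)`, `k : ℤ`, `m : ℤⁿ`. -/
def dyadicCube (n : ℕ) (k : ℤ) (m : Fin n → ℤ) : Set (En n) :=
  {x | ∀ i, (m i : ℝ) * 2 ^ k ≤ x i ∧ x i < ((m i : ℝ) + 1) * 2 ^ k}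

/-- The `δ`-dimensional dyadic Hausdorff content `H̃^δ_∞`: the infimum of `Σ ℓ(Q_i)^δ`
over all countable collections of dyadic cubes whose union's interior covers `E`. -/
def dyadicContent (n : ℕ) (δ : ℝ) (E : Set (En n)) : ℝ≥0∞ :=
  ⨅ (c : ℕ → ℤ × (Fin n → ℤ))
    (_ : E ⊆ interior (⋃ i, dyadicCube n (c i).1 (c i).2)),
    ∑' i, ENNReal.ofReal (((2 : ℝ) ^ (c i).1) ^ δ)

/-- The Choquet integral `∫_Ω f dH̃^δ_∞ := ∫_0^∞ H̃^δ_∞({x ∈ Ω : f x > t}) dt`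
of a `[0,∞]`-valued function over `Ω ⊆ ℝⁿ`. -/
def choquetIntegral (n : ℕ) (δ : ℝ) (Ω : Set (En n)) (f : En n → ℝ≥0∞) : ℝ≥0∞ :=
  ∫⁻ t in Ioi (0 : ℝ), dyadicContent n δ {x | x ∈ Ω ∧ ENNReal.ofReal t < f x}

/-- The Choquet integral `∫_Ω |f| dH̃^δ_∞` of a real-valued function. -/
def choquetIntegralAbs (n : ℕ) (δ : ℝ) (Ω : Set (En n)) (f : En n → ℝ) : ℝ≥0∞ :=
  choquetIntegral n δ Ω (fun x => ENNReal.ofReal |f x|)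

/-- The Choquet integral `∫_Ω |f| dH̃^δ_∞` of an extended-real-valued function. -/
def choquetIntegralEAbs (n : ℕ) (δ : ℝ) (Ω : Set (En n)) (f : En n → EReal) : ℝ≥0∞ :=
  choquetIntegral n δ Ω (fun x => (f x).abs)

/-- The ball average `f^δ_{B(x,r)} := (1/H̃^δ_∞(B(x,r))) ∫_{B(x,r)} f dH̃^δ_∞`. -/
def ballAvg (n : ℕ) (δ : ℝ) (f : En n → ℝ≥0∞) (x : En n) (r : ℝ) : ℝ≥0∞ :=
  choquetIntegral n δ (ball x r) f / dyadicContent n δ (ball x r)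

/-- The Hausdorff-content centred maximal function `M^δ f(x)`. -/
def maximal (n : ℕ) (δ : ℝ) (f : En n → ℝ≥0∞) (x : En n) : ℝ≥0∞ :=
  ⨆ (r : ℝ) (_ : 0 < r), ballAvg n δ f x r

/-- `f^δ_*(x) := limsup_{r→0⁺} (1/H̃^δ_∞(B(x,r))) ∫_{B(x,r)} |f(y) − f(x)| dH̃^δ_∞(y)`. -/
def lebDev (n : ℕ) (δ : ℝ) (f : En n → ℝ) (x : En n) : ℝ≥0∞ :=
  limsup (fun r : ℝ => choquetIntegralAbs n δ (ball x r) (fun y => f y - f x) /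
    dyadicContent n δ (ball x r)) (𝓝[>] (0 : ℝ))

/-- `limsup_{r→0⁺} f^δ_{B(x,r)}` of the ball averages. -/
def limsupAvg (n : ℕ) (δ : ℝ) (f : En n → ℝ≥0∞) (x : En n) : ℝ≥0∞ :=
  limsup (fun r : ℝ => ballAvg n δ f x r) (𝓝[>] (0 : ℝ))

/-!
Since `δ ≤ n`, a set of dyadic content below `1` is covered by cubes of side `ℓ ≤ 1`, for which
`ℓⁿ ≤ ℓ^δ`; so small content forces small Lebesgue measure. With the Chebyshev inequality for the
Choquet integral, convergence in `nL¹(ℝⁿ, H̃^δ_∞)` therefore implies convergence in Lebesgue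
measure, and a limit in measure of continuous functions is almost everywhere measurable.
-/

lemma dyadicContent_mono {n : ℕ} {δ : ℝ} {E F : Set (En n)} (h : E ⊆ F) :
    dyadicContent n δ E ≤ dyadicContent n δ F :=
  le_iInf fun c => le_iInf fun hc =>
    iInf_le_of_le c (iInf_le_of_le (h.trans hc) le_rfl)

lemma volume_dyadicCube (n : ℕ) (k : ℤ) (m : Fin n → ℤ) :
    volume (dyadicCube n k m) = ENNReal.ofReal ((2 : ℝ) ^ k) ^ n := by
  have hpi : dyadicCube n k m = (MeasurableEquiv.toLp 2 (Fin n → ℝ)).symm ⁻¹'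
      Set.pi univ fun i => Ico ((m i : ℝ) * 2 ^ k) (((m i : ℝ) + 1) * 2 ^ k) := by
    ext x
    simp only [dyadicCube, mem_ofPred_eq, mem_preimage, Set.mem_pi, mem_univ, forall_true_left,
      mem_Ico]
    rfl
  rw [hpi, (EuclideanSpace.volume_preserving_symm_measurableEquiv_toLp (Fin n)).measure_preimage
    (MeasurableSet.univ_pi fun i => measurableSet_Ico).nullMeasurableSet, volume_pi_pi]
  simp [Real.volume_Ico, add_mul]

lemma volume_dyadicCube_le {n : ℕ} {δ : ℝ} (hδn : δ ≤ n) {k : ℤ}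
    (hk : (2 : ℝ) ^ k ≤ 1) (m : Fin n → ℤ) :
    volume (dyadicCube n k m) ≤ ENNReal.ofReal (((2 : ℝ) ^ k) ^ δ) := by
  have hpos : (0 : ℝ) < 2 ^ k := zpow_pos two_pos k
  rw [volume_dyadicCube, ← ENNReal.ofReal_pow hpos.le, ← Real.rpow_natCast]
  exact ENNReal.ofReal_le_ofReal (Real.rpow_le_rpow_of_exponent_ge hpos hk hδn)

lemma volume_le_of_dyadicContent_lt {n : ℕ} {δ : ℝ} (hδ0 : 0 ≤ δ) (hδn : δ ≤ n)
    {E : Set (En n)} {r : ℝ≥0∞} (hr : r ≤ 1) (h : dyadicContent n δ E < r) :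
    volume E ≤ r := by
  simp only [dyadicContent, iInf_lt_iff] at h
  obtain ⟨c, hcover, hsum⟩ := h
  have hside : ∀ i, (2 : ℝ) ^ (c i).1 ≤ 1 := by
    intro i
    by_contra! hlarge
    have hterm : 1 ≤ ENNReal.ofReal (((2 : ℝ) ^ (c i).1) ^ δ) :=
      ENNReal.one_le_ofReal.mpr (Real.one_le_rpow hlarge.le hδ0)
    exact (hterm.trans (ENNReal.le_tsum i)).not_gt (hsum.trans_le hr)
  calc volume E ≤ volume (⋃ i, dyadicCube n (c i).1 (c i).2) :=
        measure_mono (hcover.trans interior_subset)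
    _ ≤ ∑' i, volume (dyadicCube n (c i).1 (c i).2) := measure_iUnion_le _
    _ ≤ ∑' i, ENNReal.ofReal (((2 : ℝ) ^ (c i).1) ^ δ) :=
        ENNReal.tsum_le_tsum fun i => volume_dyadicCube_le hδn (hside i) _
    _ ≤ r := hsum.le

lemma tendsto_volume_of_tendsto_dyadicContent {n : ℕ} {δ : ℝ} (hδ0 : 0 ≤ δ) (hδn : δ ≤ n)
    {ι : Type*} {l : Filter ι} {E : ι → Set (En n)}
    (h : Tendsto (fun i => dyadicContent n δ (E i)) l (𝓝 0)) :
    Tendsto (fun i => volume (E i)) l (𝓝 0) := by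
  refine ENNReal.tendsto_nhds_zero.mpr fun ε hε => ?_
  have hpos : 0 < min ε 1 := lt_min hε one_pos
  filter_upwards [h.eventually (gt_mem_nhds hpos)] with i hi
  exact (volume_le_of_dyadicContent_lt hδ0 hδn (min_le_right _ _) hi).trans (min_le_left _ _)

lemma mul_dyadicContent_le_choquetIntegralAbs {n : ℕ} {δ : ℝ} (g : En n → ℝ) (t : ℝ) :
    ENNReal.ofReal t * dyadicContent n δ {x | t ≤ |g x|} ≤ choquetIntegralAbs n δ univ g :=
  calc ENNReal.ofReal t * dyadicContent n δ {x | t ≤ |g x|}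
      = ∫⁻ _ in Ioo 0 t, dyadicContent n δ {x | t ≤ |g x|} := by
        rw [setLIntegral_const, Real.volume_Ioo, sub_zero, mul_comm]
    _ ≤ ∫⁻ s in Ioo 0 t,
        dyadicContent n δ {x | x ∈ univ ∧ ENNReal.ofReal s < ENNReal.ofReal |g x|} := by
        refine setLIntegral_mono' measurableSet_Ioo fun s hs => dyadicContent_mono ?_
        intro x hx
        exact ⟨mem_univ x, (ENNReal.ofReal_lt_ofReal_iff (hs.1.trans (hs.2.trans_le hx))).mpr
          (hs.2.trans_le hx)⟩
    _ ≤ choquetIntegralAbs n δ univ g := lintegral_mono_set Ioo_subset_Ioi_self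

lemma tendstoInMeasure_of_tendsto_choquetIntegralAbs {n : ℕ} {δ : ℝ} (hδ0 : 0 ≤ δ)
    (hδn : δ ≤ n) {ι : Type*} {l : Filter ι} {f : En n → ℝ} {φ : ι → En n → ℝ}
    (h : Tendsto (fun i => choquetIntegralAbs n δ univ (fun x => f x - φ i x)) l (𝓝 0)) :
    TendstoInMeasure volume φ l f := by
  refine tendstoInMeasure_iff_dist.mpr fun ε hε =>
    tendsto_volume_of_tendsto_dyadicContent hδ0 hδn ?_
  have hε' : ENNReal.ofReal ε ≠ 0 := (ENNReal.ofReal_pos.mpr hε).ne'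
  have hbound : ∀ i, dyadicContent n δ {x | ε ≤ dist (φ i x) (f x)}
      ≤ choquetIntegralAbs n δ univ (fun x => f x - φ i x) / ENNReal.ofReal ε := by
    intro i
    rw [ENNReal.le_div_iff_mul_le (Or.inl hε') (Or.inl ENNReal.ofReal_ne_top), mul_comm]
    simpa only [Real.dist_eq, abs_sub_comm] using
      mul_dyadicContent_le_choquetIntegralAbs (δ := δ) (fun x => f x - φ i x) ε
  refine tendsto_of_tendsto_of_tendsto_of_le_of_le tendsto_const_nhds ?_ (fun _ => zero_le) hbound
  simpa using ENNReal.Tendsto.div_const h (Or.inr hε')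

theorem nL1_limit_is_lebesgue_measurable_general (n : ℕ)
    (δ : ℝ) (hδ0 : 0 < δ) (hδn : δ ≤ n)
    (f : En n → ℝ)
    (hlimit : ∃ φ : ℕ → En n → ℝ, (∀ i, Continuous (φ i)) ∧
      Tendsto (fun i => choquetIntegralAbs n δ univ (fun x => f x - φ i x))
        atTop (𝓝 0)) :
    NullMeasurable f (volume : Measure (En n)) := by
  obtain ⟨φ, hφ, hφf⟩ := hlimit
  have hmeas : TendstoInMeasure volume φ atTop f :=
    tendstoInMeasure_of_tendsto_choquetIntegralAbs hδ0.le hδn hφf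
  exact (hmeas.aemeasurable fun i => (hφ i).measurable.aemeasurable).nullMeasurable

/-- an `nL¹`-limit of continuous functions in `nL¹(ℝⁿ, H̃^δ_∞)` is
Lebesgue measurable. -/
theorem nL1_limit_is_lebesgue_measurable (n : ℕ) (hn : 1 ≤ n)
    (δ : ℝ) (hδ0 : 0 < δ) (hδn : δ ≤ n)
    (f : En n → ℝ) (hf : choquetIntegralAbs n δ univ f < ⊤)
    (hlimit : ∃ φ : ℕ → En n → ℝ, (∀ i, Continuous (φ i)) ∧
      Tendsto (fun i => choquetIntegralAbs n δ univ (fun x => f x - φ i x))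
        atTop (𝓝 0)) :
    NullMeasurable f (volume : Measure (En n)) :=
  nL1_limit_is_lebesgue_measurable_general n δ hδ0 hδn f hlimit
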